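/- A nonabelian free group contains no nontrivial finitely generated subgroup that is normal and of infinite index; consequently, a nonabelian free group is not isomorphic to a semidirect product K ⋊ ℤ with K nontrivial and finitely generated. -/

import Mathlib

/-!
Let `K = ⟨S⟩` with `S` finite. Tracking the cancellation in a product of generators shows that
every prefix `p` of the reduced word of an element of `K` represents an element of `K t`, where
`t` is a prefix of the reduced word of some `s ∈ S` (or `t = 1`); there are finitely many such `t`.
If `K` is normal and contains some `u ≠ 1`, then every `g` is such a prefix: for a letter `y`
that cancels neither with the last letter of `g` nor with the ends of `u`, the reduced word of
`(g y) u (g y)⁻¹ ∈ K` is the concatenation `g y u y⁻¹ g⁻¹`. Such a `y` exists because there are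
at least four letters. Hence `K` has finite index.

For the second claim, the copy of `K` in `K ⋊ ℤ` is the kernel of the projection onto `ℤ`, so it
is a finitely generated normal subgroup of infinite index.
-/

theorem Subgroup.index_ne_zero_of_forall_exists_mul {G : Type*} [Group G] (K : Subgroup G)
    {F : Set G} (hF : F.Finite) (h : ∀ g, ∃ f ∈ F, ∃ k ∈ K, g = f * k) : K.index ≠ 0 := by
  have : Finite F := hF
  have : Finite (G ⧸ K) := by
    refine Finite.of_surjective (fun f : F => (f : G ⧸ K)) fun q => ?_
    obtain ⟨g, rfl⟩ := QuotientGroup.mk_surjective q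
    obtain ⟨f, hf, k, hk, rfl⟩ := h g
    exact ⟨⟨f, hf⟩, QuotientGroup.eq.2 (by simpa using hk)⟩
  exact index_ne_zero_of_finite

namespace FreeGroup

variable {α : Type*}

theorem fst_eq_imp_snd_eq_iff {a b : α × Bool} : (a.1 = b.1 → a.2 = b.2) ↔ b ≠ (a.1, !a.2) := by
  obtain ⟨a₁, a₂⟩ := a
  obtain ⟨b₁, b₂⟩ := b
  cases a₂ <;> cases b₂ <;> simp [eq_comm]

theorem exists_ne_ne_ne [Nontrivial α] (a b c : α × Bool) : ∃ y, y ≠ a ∧ y ≠ b ∧ y ≠ c := by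
  classical
  obtain ⟨x, z, hxz⟩ := exists_pair_ne α
  have hcard : ({a, b, c} : Finset (α × Bool)).card <
      ({(x, true), (x, false), (z, true), (z, false)} : Finset _).card :=
    Finset.card_le_three.trans_lt (by simp [hxz])
  obtain ⟨y, -, hy⟩ := Finset.exists_mem_notMem_of_card_lt_card hcard
  simp only [Finset.mem_insert, Finset.mem_singleton, not_or] at hy
  exact ⟨y, hy⟩

section Words

variable [DecidableEq α]

theorem IsReduced.invRev {L : List (α × Bool)} (h : IsReduced L) :
    IsReduced (FreeGroup.invRev L) := by
  rw [isReduced_iff_reduce_eq, reduce_invRev, h.reduce_eq]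

theorem IsReduced.exists_reduce_append_eq {L₁ L₂ : List (α × Bool)}
    (h₁ : IsReduced L₁) (h₂ : IsReduced L₂) :
    ∃ p c q, L₁ = p ++ c ∧ L₂ = FreeGroup.invRev c ++ q ∧ reduce (L₁ ++ L₂) = p ++ q := by
  induction L₁ using List.reverseRecOn generalizing L₂ with
  | nil => exact ⟨[], [], L₂, rfl, rfl, h₂.reduce_eq⟩
  | append_singleton M a ih =>
    rcases L₂ with _ | ⟨b, T⟩
    · exact ⟨M ++ [a], [], [], (List.append_nil _).symm, rfl, by simpa using h₁.reduce_eq⟩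
    by_cases hab : b = (a.1, !a.2)
    · subst hab
      obtain ⟨p, c, q, rfl, rfl, hM⟩ :=
        ih (h₁.infix (List.prefix_append _ _).isInfix) (h₂.infix (List.suffix_cons _ _).isInfix)
      refine ⟨p, c ++ [a], q, by simp, by simp [FreeGroup.invRev], ?_⟩
      rw [← hM]
      apply reduce.Step.eq
      simpa using
        Red.Step.not (L₁ := p ++ c) (L₂ := FreeGroup.invRev c ++ q) (x := a.1) (b := a.2)
    · refine ⟨M ++ [a], [], b :: T, (List.append_nil _).symm, rfl, IsReduced.reduce_eq ?_⟩
      simpa using h₁.append_overlap (L₂ := [a])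
        (by simpa using ⟨fst_eq_imp_snd_eq_iff.2 hab, h₂⟩) (by simp)

theorem exists_toWord_mul_eq (x y : FreeGroup α) :
    ∃ p c q, x.toWord = p ++ c ∧ y.toWord = FreeGroup.invRev c ++ q ∧
      (x * y).toWord = p ++ q := by
  rw [toWord_mul]
  exact isReduced_toWord.exists_reduce_append_eq isReduced_toWord

theorem prefix_toWord_mul {x y : FreeGroup α} {p : List (α × Bool)} (hp : p <+: (x * y).toWord) :
    p <+: x.toWord ∨ ∃ p', p' <+: y.toWord ∧ mk p = x * mk p' := by
  obtain ⟨P, C, Q, hx, hy, hxy⟩ := exists_toWord_mul_eq x y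
  obtain ⟨r, hr⟩ := hp
  rw [hxy] at hr
  rcases List.append_eq_append_iff.1 hr with ⟨a, rfl, -⟩ | ⟨a, rfl, rfl⟩
  · exact .inl (hx ▸ ⟨a ++ C, by simp⟩)
  · refine .inr ⟨FreeGroup.invRev C ++ a, hy ▸ ⟨r, by simp⟩, ?_⟩
    rw [← mk_toWord (x := x), hx, ← mul_mk, ← mul_mk, ← mul_mk, ← inv_mk]
    group

theorem prefix_toWord_inv {x : FreeGroup α} {p : List (α × Bool)} (hp : p <+: x⁻¹.toWord) :
    ∃ p', p' <+: x.toWord ∧ mk p = x⁻¹ * mk p' := by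
  obtain ⟨r, hr⟩ := hp
  have hx : x.toWord = FreeGroup.invRev r ++ FreeGroup.invRev p := by
    rw [← invRev_append, hr, toWord_inv, invRev_invRev]
  refine ⟨FreeGroup.invRev r, hx ▸ List.prefix_append _ _, ?_⟩
  rw [← mk_toWord (x := x), hx, ← mul_mk, ← inv_mk, ← inv_mk]
  group

open Subgroup in
theorem exists_mk_eq_mul_of_prefix {S : Set (FreeGroup α)} {x : FreeGroup α} (hx : x ∈ closure S)
    {p : List (α × Bool)} (hp : p <+: x.toWord) :
    ∃ s ∈ insert 1 S, ∃ t, t <+: s.toWord ∧ ∃ k ∈ closure S, mk p = k * mk t := by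
  induction hx using closure_induction generalizing p with
  | mem s hs => exact ⟨s, Set.mem_insert_of_mem _ hs, p, hp, 1, one_mem _, (one_mul _).symm⟩
  | one =>
    rw [toWord_one, List.prefix_nil] at hp
    exact ⟨1, Set.mem_insert _ _, [], List.nil_prefix, 1, one_mem _, by simp [hp, ← one_eq_mk]⟩
  | mul x y hx hy ihx ihy =>
    rcases prefix_toWord_mul hp with hp | ⟨p', hp', e⟩
    · exact ihx hp
    · obtain ⟨s, hs, t, ht, k, hk, e'⟩ := ihy hp'
      exact ⟨s, hs, t, ht, x * k, mul_mem hx hk, by rw [e, e', mul_assoc]⟩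
  | inv x hx ihx =>
    obtain ⟨p', hp', e⟩ := prefix_toWord_inv hp
    obtain ⟨s, hs, t, ht, k, hk, e'⟩ := ihx hp'
    exact ⟨s, hs, t, ht, x⁻¹ * k, mul_mem (inv_mem hx) hk, by rw [e, e', mul_assoc]⟩

theorem IsReduced.append_append_invRev {Y U : List (α × Bool)} (hU : U ≠ [])
    (h₁ : IsReduced (Y ++ U)) (h₂ : IsReduced (Y ++ FreeGroup.invRev U)) :
    IsReduced (Y ++ U ++ FreeGroup.invRev Y) := by
  refine h₁.append_overlap ?_ hU
  simpa [invRev_append, invRev_invRev] using h₂.invRev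

theorem exists_isReduced_conj [Nontrivial α] {G U : List (α × Bool)} (hG : IsReduced G)
    (hU : IsReduced U) (hU₀ : U ≠ []) :
    ∃ y, IsReduced (G ++ [y] ++ U ++ FreeGroup.invRev (G ++ [y])) := by
  obtain ⟨y, hyG, hyh, hyl⟩ :=
    exists_ne_ne_ne ((G.getLast?.map fun x => (x.1, !x.2)).getD (U.head hU₀))
      ((U.head hU₀).1, !(U.head hU₀).2) (U.getLast hU₀)
  have hGy : IsReduced (G ++ [y]) := by
    refine List.isChain_append.2 ⟨hG, List.isChain_singleton _, fun a ha b hb => ?_⟩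
    obtain rfl : b = y := by simpa [eq_comm] using hb
    rw [fst_eq_imp_snd_eq_iff]
    simpa [Option.mem_def.1 ha] using hyG
  have hyU : IsReduced ([y] ++ U) := by
    refine List.isChain_cons.2 ⟨fun b hb => ?_, hU⟩
    obtain rfl : b = U.head hU₀ := by simpa [List.head?_eq_some_head hU₀, eq_comm] using hb
    rw [fst_eq_imp_snd_eq_iff]
    intro h
    exact hyh (by simp [h])
  have hyU' : IsReduced ([y] ++ FreeGroup.invRev U) := by
    refine List.isChain_cons.2 ⟨fun b hb => ?_, hU.invRev⟩
    obtain rfl : b = ((U.getLast hU₀).1, !(U.getLast hU₀).2) := by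
      simpa [FreeGroup.invRev, List.getLast?_eq_some_getLast hU₀, eq_comm] using hb
    rw [fst_eq_imp_snd_eq_iff]
    intro h
    exact hyl (by simpa [Prod.ext_iff] using h.symm)
  exact ⟨y, (hGy.append_overlap hyU (List.cons_ne_nil _ _)).append_append_invRev hU₀
    (hGy.append_overlap hyU' (List.cons_ne_nil _ _))⟩

theorem exists_prefix_toWord_conj [Nontrivial α] (g : FreeGroup α) {u : FreeGroup α}
    (hu : u ≠ 1) : ∃ v, g.toWord <+: (v * u * v⁻¹).toWord := by
  obtain ⟨y, hy⟩ := exists_isReduced_conj (isReduced_toWord (x := g)) isReduced_toWord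
    (toWord_eq_nil_iff.not.2 hu)
  refine ⟨mk (g.toWord ++ [y]), ?_⟩
  rw [← mk_toWord (x := u), inv_mk, mul_mk, mul_mk, toWord_mk, hy.reduce_eq,
    List.append_assoc, List.append_assoc]
  exact List.prefix_append _ _

end Words

open Subgroup in
theorem eq_bot_of_normal_of_fg_of_index_eq_zero [Nontrivial α] {K : Subgroup (FreeGroup α)}
    (hN : K.Normal) (hK : K.FG) (hidx : K.index = 0) : K = ⊥ := by
  classical
  by_contra hne
  obtain ⟨⟨u, huK⟩, hu⟩ := ne_bot_iff_exists_ne_one.1 hne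
  obtain ⟨S, rfl⟩ := hK
  refine index_ne_zero_of_forall_exists_mul _
    ((S.finite_toSet.insert 1).biUnion fun s _ => s.toWord.inits.finite_toSet.image mk)
    (fun g => ?_) hidx
  obtain ⟨v, hv⟩ := exists_prefix_toWord_conj g (u := u) (by simpa using hu)
  obtain ⟨s, hs, t, ht, k, hk, hg⟩ := exists_mk_eq_mul_of_prefix (hN.conj_mem u huK v) hv
  rw [mk_toWord] at hg
  refine ⟨mk t, Set.mem_biUnion hs ⟨t, (List.mem_inits _ _).2 ht, rfl⟩, _,
    hN.conj_mem k hk (mk t)⁻¹, ?_⟩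
  rw [hg]
  group

theorem subsingleton_of_mulEquiv_semidirectProduct [Nontrivial α] {K : Type*} [Group K]
    [Group.FG K] {φ : Multiplicative ℤ →* MulAut K}
    (e : FreeGroup α ≃* K ⋊[φ] Multiplicative ℤ) : Subsingleton K := by
  set ι : K →* FreeGroup α := e.symm.toMonoidHom.comp SemidirectProduct.inl
  have hι : Function.Injective ι := e.symm.injective.comp SemidirectProduct.inl_injective
  have hrange : ι.range = (SemidirectProduct.rightHom.comp e.toMonoidHom).ker := by
    ext x
    simp [ι, ← SemidirectProduct.range_inl_eq_ker_rightHom, MulEquiv.symm_apply_eq]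
  have hbot : ι.range = ⊥ := by
    refine eq_bot_of_normal_of_fg_of_index_eq_zero (hrange ▸ MonoidHom.normal_ker _)
      ((Group.fg_iff_subgroup_fg _).1 inferInstance) ?_
    rw [hrange, Subgroup.index_ker, MonoidHom.range_eq_top_of_surjective _
      (by exact SemidirectProduct.rightHom_surjective.comp e.surjective), Subgroup.card_top]
    exact Nat.card_eq_zero_of_infinite
  rw [MonoidHom.range_eq_bot_iff] at hbot
  exact ⟨fun a b => hι (by simp [hbot])⟩

end FreeGroup

/-- A nonabelian free group has no nontrivial finitely generated normal
subgroup of infinite index, and hence is not a semidirect product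
K ⋊ ℤ with K nontrivial finitely generated. -/
theorem stmt_19 {α : Type*} [Nontrivial α] :
    (∀ K : Subgroup (FreeGroup α), K.Normal → K.FG → K.index = 0 →
      K = ⊥) ∧
    (∀ (K : Type) [Group K], Group.FG K →
      ∀ φ : Multiplicative ℤ →* MulAut K,
        Nonempty (FreeGroup α ≃* K ⋊[φ] Multiplicative ℤ) →
        Subsingleton K) :=
  ⟨fun _ hN hK hidx => FreeGroup.eq_bot_of_normal_of_fg_of_index_eq_zero hN hK hidx,
    fun _ _ _ _ ⟨e⟩ => FreeGroup.subsingleton_of_mulEquiv_semidirectProduct e⟩
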